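/- arXiv:1706.09288 — 3 statements merged into one kernel-verified Lean document; each statement's English description precedes it below -/
import Mathlib

section
/- Let A ∈ ℝ^{M×N} have unit-norm columns, let Λ ⊆ {1,…,N} be nonempty, let s ∈ ℝ^N be supported on Λ, and let w ∈ ℝ^M. Suppose both: (i) max_{k∉Λ} |⟨A_k, A_Λ s_Λ + w⟩| < (min_{j∈Λ} |s_j|)/2, and (ii) max_{j∈Λ} |⟨A_j, A_{Λ∖{j}} s_{Λ∖{j}} + w⟩| < (min_{j∈Λ} |s_j|)/2. Then min_{j∈Λ} |⟨A_j, A_Λ s_Λ + w⟩| ≥ max_{k∉Λ} |⟨A_k, A_Λ s_Λ + w⟩|. -/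
open Finset

/-- The implication from the two conditions in equation (19) of the paper to the
OMP support-identification condition (17):
if `max_{k∉Λ} |⟨A_k, A_Λ s_Λ + w⟩| < (min_{j∈Λ}|s_j|)/2` and
`max_{j∈Λ} |⟨A_j, A_{Λ∖{j}} s_{Λ∖{j}} + w⟩| < (min_{j∈Λ}|s_j|)/2`, then
`min_{j∈Λ} |⟨A_j, A_Λ s_Λ + w⟩| ≥ max_{k∉Λ} |⟨A_k, A_Λ s_Λ + w⟩|`. -/
theorem omp_eq19_implies_eq17 {M N : ℕ} (A : Matrix (Fin M) (Fin N) ℝ)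
    (hunit : ∀ j : Fin N, ∑ m, A m j ^ 2 = 1)
    (Λ : Finset (Fin N)) (hΛ : Λ.Nonempty)
    (s : Fin N → ℝ) (hsupp : ∀ n ∉ Λ, s n = 0)
    (w : Fin M → ℝ)
    (h1 : ∀ k ∉ Λ, |∑ m, A m k * ((∑ n ∈ Λ, s n * A m n) + w m)|
            < (Λ.inf' hΛ fun j => |s j|) / 2)
    (h2 : ∀ j ∈ Λ, |∑ m, A m j * ((∑ n ∈ Λ.erase j, s n * A m n) + w m)|
            < (Λ.inf' hΛ fun j => |s j|) / 2) :
    ∀ j ∈ Λ, ∀ k ∉ Λ,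
      |∑ m, A m k * ((∑ n ∈ Λ, s n * A m n) + w m)| ≤
        |∑ m, A m j * ((∑ n ∈ Λ, s n * A m n) + w m)| := by
  intro j hj k hk
  set c := Λ.inf' hΛ fun j => |s j| with hc
  have key : ∑ m, A m j * ((∑ n ∈ Λ, s n * A m n) + w m)
      = s j + ∑ m, A m j * ((∑ n ∈ Λ.erase j, s n * A m n) + w m) := by
    have : ∀ m, (∑ n ∈ Λ, s n * A m n) = s j * A m j + ∑ n ∈ Λ.erase j, s n * A m n := by
      intro m
      rw [← Finset.add_sum_erase _ _ hj]
    calc ∑ m, A m j * ((∑ n ∈ Λ, s n * A m n) + w m)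
        = ∑ m, (s j * A m j ^ 2 + A m j * ((∑ n ∈ Λ.erase j, s n * A m n) + w m)) := by
          apply Finset.sum_congr rfl; intro m _; rw [this m]; ring
      _ = s j * ∑ m, A m j ^ 2 + ∑ m, A m j * ((∑ n ∈ Λ.erase j, s n * A m n) + w m) := by
          rw [Finset.sum_add_distrib, Finset.mul_sum]
      _ = _ := by rw [hunit j]; ring
  have hsj : c ≤ |s j| := Finset.inf'_le _ hj
  have h2' := h2 j hj
  have hjlb : c / 2 < |∑ m, A m j * ((∑ n ∈ Λ, s n * A m n) + w m)| := by
    rw [key]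
    have := abs_abs_sub_abs_le_abs_sub (s j + ∑ m, A m j * ((∑ n ∈ Λ.erase j, s n * A m n) + w m)) (s j)
    have h3 : |s j| - |s j + ∑ m, A m j * ((∑ n ∈ Λ.erase j, s n * A m n) + w m)|
        ≤ |∑ m, A m j * ((∑ n ∈ Λ.erase j, s n * A m n) + w m)| := by
      simpa [abs_sub_comm] using abs_sub_abs_le_abs_sub (s j)
        (s j + ∑ m, A m j * ((∑ n ∈ Λ.erase j, s n * A m n) + w m))
    linarith
  linarith [h1 k hk]
end

section
/- Fix a matrix A ∈ ℝ^{M×N}, a subset Λ ⊆ {1,…,N} with |Λ| = τ ≥ 1, and an index k ∉ Λ; write μ_{k,n} = ⟨A_k, A_n⟩. Let w ∈ ℝ^M be a fixed vector with |⟨A_k, w⟩| ≤ β for some β ≥ 0. Let s₁,…,s_N be independent real random variables with E[s_n] = 0 for all n and s_n = 0 almost surely for n ∉ Λ, and suppose constants c ≥ 0 and ν ≥ 0 satisfy |μ_{k,n} s_n| ≤ c almost surely and E[μ_{k,n}² s_n²] ≤ ν for every n ∈ Λ. Then for any s_min with ρ := s_min/2 − β > 0, the probability that |⟨A_k, A s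 + w⟩| ≥ s_min/2 is at most 2·exp( −ρ² / (2(τν + cρ/3)) ). -/
/-!
Almost surely `⟨A_k, A s + w⟩ = ∑_{n ∈ Λ} μ_{k,n} s_n + ⟨A_k, w⟩`, so on the event
`|⟨A_k, A s + w⟩| ≥ s_min / 2` the sum of the `τ` independent centred variables `μ_{k,n} s_n`
has absolute value at least `ρ`, and Bernstein's inequality bounds the probability of that.
Bernstein's inequality is Chernoff's bound combined with `e^x ≤ 1 + x + x² / (2 (1 - a / 3))`
for `|x| ≤ a < 3`, which gives `E e^{tX} ≤ exp (t² v / (2 (1 - t c / 3)))`.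
-/

open MeasureTheory ProbabilityTheory Real Finset
open scoped Nat

namespace Real

theorem exp_le_one_add_add_sq_div_of_abs_le {x a : ℝ} (hx : |x| ≤ a) (ha : a < 3) :
    exp x ≤ 1 + x + x ^ 2 / (2 * (1 - a / 3)) := by
  have ha₀ : 0 ≤ a / 3 := by linarith [abs_nonneg x]
  have ha₁ : a / 3 < 1 := by linarith
  have hsum : Summable fun n ↦ x ^ n / n ! := summable_pow_div_factorial x
  have hgeom : Summable fun i : ℕ ↦ x ^ 2 / 2 * (a / 3) ^ i :=
    (summable_geometric_of_lt_one ha₀ ha₁).mul_left _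
  -- `2 * 3 ^ i ≤ (i + 2)!` makes the tail of the series geometric with ratio `a / 3`
  have hterm (i : ℕ) : x ^ (i + 2) / (i + 2)! ≤ x ^ 2 / 2 * (a / 3) ^ i := by
    have hfact : (2 * 3 ^ i : ℝ) ≤ (i + 2)! := by
      exact_mod_cast (add_comm i 2 ▸ Nat.factorial_mul_pow_le_factorial : 2! * 3 ^ i ≤ (i + 2)!)
    calc x ^ (i + 2) / (i + 2)! ≤ x ^ 2 * |x| ^ i / (i + 2)! := by
          gcongr
          rw [pow_add, mul_comm]
          exact mul_le_mul_of_nonneg_left ((le_abs_self _).trans (abs_pow x i).le) (sq_nonneg x)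
      _ ≤ x ^ 2 * a ^ i / (2 * 3 ^ i) := by
          have : 0 ≤ a := (abs_nonneg x).trans hx
          gcongr
      _ = x ^ 2 / 2 * (a / 3) ^ i := by rw [div_pow]; ring
  have htail : ∑' i : ℕ, x ^ (i + 2) / (i + 2)! ≤ x ^ 2 / (2 * (1 - a / 3)) :=
    calc ∑' i : ℕ, x ^ (i + 2) / (i + 2)! ≤ ∑' i : ℕ, x ^ 2 / 2 * (a / 3) ^ i :=
          ((summable_nat_add_iff 2).mpr hsum).tsum_le_tsum hterm hgeom
      _ = x ^ 2 / (2 * (1 - a / 3)) := by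
          rw [tsum_mul_left, tsum_geometric_of_lt_one ha₀ ha₁, div_mul_eq_div_div_swap]; ring
  have hhead : ∑ i ∈ range 2, x ^ i / i ! = 1 + x := by norm_num [sum_range_succ]
  simp only [exp_eq_exp_ℝ, NormedSpace.exp_eq_tsum_div]
  rw [← hsum.sum_add_tsum_nat_add 2]
  linarith

end Real

section Bernstein

variable {Ω : Type*} [MeasurableSpace Ω] {P : Measure Ω} [IsProbabilityMeasure P]

theorem integrable_sq_of_ae_abs_le {X : Ω → ℝ} (hX : AEMeasurable X P) {c : ℝ}
    (hb : ∀ᵐ ω ∂P, |X ω| ≤ c) : Integrable (fun ω ↦ X ω ^ 2) P :=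
  .of_bound (hX.pow_const 2).aestronglyMeasurable (c ^ 2) <| hb.mono fun ω h ↦ by
    rw [norm_pow, Real.norm_eq_abs]; gcongr

theorem integrable_exp_mul_of_ae_le {X : Ω → ℝ} (hX : AEMeasurable X P) {c t : ℝ} (ht : 0 ≤ t)
    (hb : ∀ᵐ ω ∂P, X ω ≤ c) : Integrable (fun ω ↦ exp (t * X ω)) P :=
  .of_bound (hX.const_mul t).exp.aestronglyMeasurable (exp (t * c)) <| hb.mono fun ω h ↦ by
    rw [Real.norm_eq_abs, abs_exp, exp_le_exp]; gcongr

theorem mgf_le_exp_of_abs_le {X : Ω → ℝ} (hX : AEMeasurable X P) {c v t : ℝ}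
    (hcent : ∫ ω, X ω ∂P = 0) (hb : ∀ᵐ ω ∂P, |X ω| ≤ c) (hvar : ∫ ω, X ω ^ 2 ∂P ≤ v)
    (ht : 0 ≤ t) (htc : t * c < 3) :
    mgf X P t ≤ exp (t ^ 2 * v / (2 * (1 - t * c / 3))) := by
  set D := 2 * (1 - t * c / 3)
  have hD : 0 < D := by simp only [D]; linarith
  have hint : Integrable X P := .of_bound hX.aestronglyMeasurable c hb
  have hint_lin : Integrable (fun ω ↦ 1 + t * X ω) P := (integrable_const 1).add (hint.const_mul t)
  have hint_sq := integrable_sq_of_ae_abs_le hX hb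
  have hpoint : ∀ᵐ ω ∂P, exp (t * X ω) ≤ 1 + t * X ω + t ^ 2 / D * X ω ^ 2 :=
    hb.mono fun ω h ↦ by
      have habs : |t * X ω| ≤ t * c := by rw [abs_mul, abs_of_nonneg ht]; gcongr
      convert exp_le_one_add_add_sq_div_of_abs_le habs htc using 1; ring
  calc mgf X P t ≤ ∫ ω, 1 + t * X ω + t ^ 2 / D * X ω ^ 2 ∂P :=
        integral_mono_ae (integrable_exp_mul_of_ae_le hX ht (hb.mono fun ω ↦ (le_abs_self _).trans))
          (hint_lin.add (hint_sq.const_mul _)) hpoint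
    _ = 1 + t ^ 2 / D * ∫ ω, X ω ^ 2 ∂P := by
        rw [integral_add hint_lin (hint_sq.const_mul _),
          integral_add (integrable_const 1) (hint.const_mul t), integral_const_mul,
          integral_const_mul, hcent]
        simp
    _ ≤ 1 + t ^ 2 / D * v := by gcongr
    _ ≤ exp (t ^ 2 * v / D) := by rw [div_mul_eq_mul_div]; linarith [add_one_le_exp (t ^ 2 * v / D)]

variable {ι : Type*} {X : ι → Ω → ℝ} {s : Finset ι} {c v ρ : ℝ}

-- Chernoff's bound at `t = ρ / (#s * v + c * ρ / 3)`; `0 < #s * v` is what makes `t * c < 3`.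
theorem measureReal_sum_ge_le_of_card_mul_pos (hXm : ∀ i, Measurable (X i))
    (hind : iIndepFun X P) (hcent : ∀ i ∈ s, ∫ ω, X i ω ∂P = 0)
    (hb : ∀ i ∈ s, ∀ᵐ ω ∂P, |X i ω| ≤ c) (hvar : ∀ i ∈ s, ∫ ω, X i ω ^ 2 ∂P ≤ v)
    (hc : 0 ≤ c) (hsv : 0 < #s * v) (hρ : 0 < ρ) :
    P.real {ω | ρ ≤ ∑ i ∈ s, X i ω} ≤ exp (-ρ ^ 2 / (2 * (#s * v + c * ρ / 3))) := by
  set D := (#s : ℝ) * v + c * ρ / 3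
  have hD : 0 < D := by positivity
  set t := ρ / D
  have ht : 0 ≤ t := by positivity
  have hone : 1 - t * c / 3 = #s * v / D := by simp only [t, D]; field_simp; ring
  have htc : t * c < 3 := by linarith [div_pos hsv hD]
  have hint : ∀ i ∈ s, Integrable (fun ω ↦ exp (t * X i ω)) P := fun i hi ↦
    integrable_exp_mul_of_ae_le (hXm i).aemeasurable ht
      ((hb i hi).mono fun ω ↦ (le_abs_self _).trans)
  calc P.real {ω | ρ ≤ ∑ i ∈ s, X i ω}
      ≤ exp (-t * ρ) * mgf (∑ i ∈ s, X i) P t := by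
        simpa only [Finset.sum_apply] using
          measure_ge_le_exp_mul_mgf ρ ht (hind.integrable_exp_mul_sum hXm hint)
    _ = exp (-t * ρ) * ∏ i ∈ s, mgf (X i) P t := by rw [hind.mgf_sum hXm]
    _ ≤ exp (-t * ρ) * ∏ _i ∈ s, exp (t ^ 2 * v / (2 * (1 - t * c / 3))) := by
        gcongr with i hi
        · exact fun i _ ↦ mgf_nonneg
        · exact mgf_le_exp_of_abs_le (hXm i).aemeasurable (hcent i hi) (hb i hi) (hvar i hi) ht htc
    _ = exp (-ρ ^ 2 / (2 * D)) := by
        obtain ⟨hs, hv⟩ := mul_ne_zero_iff.1 hsv.ne'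
        rw [prod_const, ← exp_nat_mul, ← exp_add, hone]
        congr 1
        simp only [t]
        field_simp
        ring

theorem measureReal_sum_ge_le_bernstein (hXm : ∀ i, Measurable (X i)) (hind : iIndepFun X P)
    (hcent : ∀ i ∈ s, ∫ ω, X i ω ∂P = 0) (hb : ∀ i ∈ s, ∀ᵐ ω ∂P, |X i ω| ≤ c)
    (hvar : ∀ i ∈ s, ∫ ω, X i ω ^ 2 ∂P ≤ v) (hρ : 0 < ρ) :
    P.real {ω | ρ ≤ ∑ i ∈ s, X i ω} ≤ exp (-ρ ^ 2 / (2 * (#s * v + c * ρ / 3))) := by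
  by_cases hdeg : ∀ i ∈ s, X i =ᵐ[P] 0
  · have hnull : P.real {ω | ρ ≤ ∑ i ∈ s, X i ω} = 0 := by
      rw [measureReal_eq_zero_iff, measure_eq_zero_iff_ae_notMem]
      filter_upwards [(Filter.eventually_all_finset s).2 hdeg] with ω hω
      simpa [sum_eq_zero hω] using hρ
    exact hnull ▸ (exp_pos _).le
  obtain ⟨i, hi, hXi⟩ := not_forall₂.1 hdeg
  have hint_sq := integrable_sq_of_ae_abs_le (hXm i).aemeasurable (hb i hi)
  have hvar_pos : 0 < ∫ ω, X i ω ^ 2 ∂P := by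
    refine (integral_nonneg fun ω ↦ sq_nonneg _).lt_of_ne fun h ↦ hXi ?_
    filter_upwards [(integral_eq_zero_iff_of_nonneg (fun ω ↦ sq_nonneg _) hint_sq).1 h.symm]
      with ω hω
    exact pow_eq_zero_iff two_ne_zero |>.1 hω
  have hc : 0 ≤ c := by
    obtain ⟨ω, hω⟩ := (hb i hi).exists
    exact (abs_nonneg _).trans hω
  have hsv : 0 < #s * v :=
    mul_pos (by exact_mod_cast card_pos.2 ⟨i, hi⟩) (hvar_pos.trans_le (hvar i hi))
  exact measureReal_sum_ge_le_of_card_mul_pos hXm hind hcent hb hvar hc hsv hρ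

theorem measureReal_abs_sum_ge_le_bernstein (hXm : ∀ i, Measurable (X i))
    (hind : iIndepFun X P) (hcent : ∀ i ∈ s, ∫ ω, X i ω ∂P = 0)
    (hb : ∀ i ∈ s, ∀ᵐ ω ∂P, |X i ω| ≤ c) (hvar : ∀ i ∈ s, ∫ ω, X i ω ^ 2 ∂P ≤ v) (hρ : 0 < ρ) :
    P.real {ω | ρ ≤ |∑ i ∈ s, X i ω|} ≤ 2 * exp (-ρ ^ 2 / (2 * (#s * v + c * ρ / 3))) := by
  have hupper := measureReal_sum_ge_le_bernstein hXm hind hcent hb hvar hρ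
  have hlower := measureReal_sum_ge_le_bernstein (X := fun i ω ↦ -X i ω) (fun i ↦ (hXm i).neg)
    (hind.comp (fun _ ↦ Neg.neg) fun _ ↦ measurable_neg)
    (fun i hi ↦ by rw [integral_neg, hcent i hi, neg_zero])
    (fun i hi ↦ by simpa only [abs_neg] using hb i hi)
    (fun i hi ↦ by simpa only [neg_sq] using hvar i hi) hρ
  calc P.real {ω | ρ ≤ |∑ i ∈ s, X i ω|}
      ≤ P.real ({ω | ρ ≤ ∑ i ∈ s, X i ω} ∪ {ω | ρ ≤ ∑ i ∈ s, -X i ω}) :=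
        measureReal_mono fun ω (h : ρ ≤ |_|) ↦ by simpa [sum_neg_distrib] using le_abs.1 h
    _ ≤ P.real {ω | ρ ≤ ∑ i ∈ s, X i ω} + P.real {ω | ρ ≤ ∑ i ∈ s, -X i ω} :=
        measureReal_union_le _ _
    _ ≤ 2 * exp (-ρ ^ 2 / (2 * (#s * v + c * ρ / 3))) := by linarith

end Bernstein

theorem omp_eq21_general {M N : ℕ} (A : Matrix (Fin M) (Fin N) ℝ)
    (Λ : Finset (Fin N)) (τ : ℕ) (hcard : Λ.card = τ)
    (k : Fin N)
    (w : Fin M → ℝ) (β : ℝ) (hw : |∑ m, A m k * w m| ≤ β)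
    {Ω : Type*} [MeasurableSpace Ω] (P : Measure Ω) [IsProbabilityMeasure P]
    (s : Fin N → Ω → ℝ) (hmeas : ∀ n, Measurable (s n))
    (hindep : iIndepFun s P)
    (hcent : ∀ n, ∫ ω, s n ω ∂P = 0)
    (hzero : ∀ n ∉ Λ, ∀ᵐ ω ∂P, s n ω = 0)
    (c ν : ℝ)
    (hbdd : ∀ n ∈ Λ, ∀ᵐ ω ∂P, |(∑ m, A m k * A m n) * s n ω| ≤ c)
    (hvar : ∀ n ∈ Λ, ∫ ω, (∑ m, A m k * A m n) ^ 2 * (s n ω) ^ 2 ∂P ≤ ν)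
    (smin ρ : ℝ) (hρ : ρ = smin / 2 - β) (hρpos : 0 < ρ) :
    P {ω | smin / 2 ≤ |∑ m, A m k * (A.mulVec (fun n => s n ω) m + w m)|}
      ≤ ENNReal.ofReal
          (2 * Real.exp (-ρ ^ 2 / (2 * ((τ : ℝ) * ν + c * ρ / 3)))) := by
  set X : Fin N → Ω → ℝ := fun n ω ↦ (∑ m, A m k * A m n) * s n ω
  have hbernstein := measureReal_abs_sum_ge_le_bernstein (s := Λ) (X := X)
    (fun n ↦ (hmeas n).const_mul _) (hindep.comp _ fun n ↦ measurable_const_mul _)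
    (fun n _ ↦ by simp only [X, integral_const_mul, hcent, mul_zero]) hbdd
    (fun n hn ↦ by simpa only [X, mul_pow] using hvar n hn) hρpos
  rw [hcard] at hbernstein
  have hsupp : ∀ᵐ ω ∂P, ∑ m, A m k * A.mulVec (fun n ↦ s n ω) m = ∑ n ∈ Λ, X n ω := by
    filter_upwards [(Filter.eventually_all_finset Λᶜ).2 fun n hn ↦ hzero n (mem_compl.1 hn)]
      with ω hω
    refine (Matrix.dotProduct_mulVec _ _ _).trans (sum_subset (subset_univ Λ) fun n _ hn ↦ ?_).symm
    simp [hω n (mem_compl.2 hn)]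
  calc P {ω | smin / 2 ≤ |∑ m, A m k * (A.mulVec (fun n => s n ω) m + w m)|}
      ≤ P {ω | ρ ≤ |∑ n ∈ Λ, X n ω|} := by
        refine measure_mono_ae (hsupp.mono fun ω hω (hmem : smin / 2 ≤ |_|) ↦ ?_)
        show ρ ≤ |∑ n ∈ Λ, X n ω|
        simp only [mul_add, sum_add_distrib, hω] at hmem
        linarith [abs_add_le (∑ n ∈ Λ, X n ω) (∑ m, A m k * w m)]
    _ = ENNReal.ofReal (P.real {ω | ρ ≤ |∑ n ∈ Λ, X n ω|}) := (ofReal_measureReal).symm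
    _ ≤ _ := ENNReal.ofReal_le_ofReal hbernstein

/-- Equation (21) of the paper: for `k ∉ Λ` with `|Λ| = τ ≥ 1` and a fixed vector `w`
with `|⟨A_k, w⟩| ≤ β`,
`Pr{ |⟨A_k, A s + w⟩| ≥ s_min/2 } ≤ 2·exp(−ρ²/(2(τν + cρ/3)))`,
where `ρ = s_min/2 − β > 0` and `s` is supported on `Λ`. -/
theorem omp_eq21 {M N : ℕ} (A : Matrix (Fin M) (Fin N) ℝ)
    (Λ : Finset (Fin N)) (τ : ℕ) (hcard : Λ.card = τ) (hτ : 1 ≤ τ)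
    (k : Fin N) (hk : k ∉ Λ)
    (w : Fin M → ℝ) (β : ℝ) (hβ : 0 ≤ β) (hw : |∑ m, A m k * w m| ≤ β)
    {Ω : Type*} [MeasurableSpace Ω] (P : Measure Ω) [IsProbabilityMeasure P]
    (s : Fin N → Ω → ℝ) (hmeas : ∀ n, Measurable (s n))
    (hindep : iIndepFun s P)
    (hcent : ∀ n, ∫ ω, s n ω ∂P = 0)
    (hzero : ∀ n ∉ Λ, ∀ᵐ ω ∂P, s n ω = 0)
    (c ν : ℝ) (hc : 0 ≤ c) (hν : 0 ≤ ν)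
    (hbdd : ∀ n ∈ Λ, ∀ᵐ ω ∂P, |(∑ m, A m k * A m n) * s n ω| ≤ c)
    (hvar : ∀ n ∈ Λ, ∫ ω, (∑ m, A m k * A m n) ^ 2 * (s n ω) ^ 2 ∂P ≤ ν)
    (smin ρ : ℝ) (hρ : ρ = smin / 2 - β) (hρpos : 0 < ρ) :
    P {ω | smin / 2 ≤ |∑ m, A m k * (A.mulVec (fun n => s n ω) m + w m)|}
      ≤ ENNReal.ofReal
          (2 * Real.exp (-ρ ^ 2 / (2 * ((τ : ℝ) * ν + c * ρ / 3)))) :=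
  omp_eq21_general A Λ τ hcard k w β hw P s hmeas hindep hcent hzero c ν hbdd hvar smin ρ hρ hρpos
end

section
/- Let N ≥ 2 be an integer, α > 0, σ > 0, and β = σ·√(2(1+α)·log N). For any real number q with 0 ≤ q ≤ 1, the quantity (1 − N·√(2/π)·(σ/β)·exp(−β²/(2σ²)))·q is at most 1 − 1/(N^α·√(π(1+α)·log N)). In particular, the success-probability lower bound (9) of the paper's Theorem 2 never exceeds the success probability (5) of Ben-Haim et al.'s Theorem 1. -/
/-!
With `β = σ √(2(1+α) log N)` the Gaussian factor `exp (-β²/(2σ²))` equals `N^(-(1+α))`, so the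
first factor of (9) is exactly the bound (5). That bound lies in `[0, 1]` because
`N^α √(π(1+α) log N) ≥ 1` once `N ≥ 2`, so multiplying it by `q ≤ 1` cannot increase it.
-/

open Real

lemma exp_neg_sq_div_eq_rpow_neg {x c σ : ℝ} (hx : 0 < x) (hσ : σ ≠ 0) (hcx : 0 ≤ c * log x) :
    exp (-(σ * √(2 * c * log x)) ^ 2 / (2 * σ ^ 2)) = x ^ (-c) := by
  have hsq : (σ * √(2 * c * log x)) ^ 2 = σ ^ 2 * (2 * (c * log x)) := by
    rw [mul_pow, sq_sqrt (by linarith)]; ring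
  rw [hsq, rpow_def_of_pos hx]
  congr 1
  field_simp

lemma sqrt_two_div_pi_div_sqrt_two_mul {t : ℝ} (ht : 0 ≤ t) :
    √(2 / π) / √(2 * t) = (√(π * t))⁻¹ := by
  rw [← sqrt_div' _ (by positivity), ← sqrt_inv]
  congr 1
  field_simp

lemma mul_sqrt_two_div_pi_mul_exp_eq {x α σ : ℝ} (hx : 1 < x) (hα : 0 < 1 + α) (hσ : σ ≠ 0) :
    x * √(2 / π) * (σ / (σ * √(2 * (1 + α) * log x)))
        * exp (-(σ * √(2 * (1 + α) * log x)) ^ 2 / (2 * σ ^ 2))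
      = 1 / (x ^ α * √(π * (1 + α) * log x)) := by
  have hx0 : 0 < x := by linarith
  have hL : 0 < (1 + α) * log x := mul_pos hα (log_pos hx)
  have hx1 : x * x ^ (-(1 + α)) = (x ^ α)⁻¹ := by
    rw [rpow_neg hx0.le, rpow_add hx0, rpow_one]
    field_simp
  have hπ : √(2 / π) / √(2 * (1 + α) * log x) = (√(π * (1 + α) * log x))⁻¹ := by
    simpa only [mul_assoc] using sqrt_two_div_pi_div_sqrt_two_mul hL.le
  rw [exp_neg_sq_div_eq_rpow_neg hx0 hσ hL.le, div_mul_cancel_left₀ hσ]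
  calc x * √(2 / π) * (√(2 * (1 + α) * log x))⁻¹ * x ^ (-(1 + α))
      = (x * x ^ (-(1 + α))) * (√(2 / π) / √(2 * (1 + α) * log x)) := by ring
    _ = 1 / (x ^ α * √(π * (1 + α) * log x)) := by rw [hx1, hπ, one_div, mul_inv]

lemma one_le_rpow_mul_sqrt_pi_mul_log {x α : ℝ} (hx : 2 ≤ x) (hα : 0 ≤ α) :
    1 ≤ x ^ α * √(π * (1 + α) * log x) := by
  have hlog : 0.6931471803 < log x :=
    log_two_gt_d9.trans_le (log_le_log (by norm_num) hx)
  have hπα : 3 ≤ π * (1 + α) := by nlinarith [pi_gt_three]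
  have hπαL : 1 ≤ π * (1 + α) * log x := by nlinarith
  calc (1 : ℝ) = 1 * √1 := by simp
    _ ≤ x ^ α * √(π * (1 + α) * log x) :=
      mul_le_mul (one_le_rpow (by linarith) hα) (sqrt_le_sqrt hπαL) (by positivity) (by positivity)

theorem bound_comparison_general (N : ℕ) (hN : 2 ≤ N) (α σ : ℝ) (hα : 0 < α) (hσ : 0 < σ)
    (β : ℝ) (hβ : β = σ * Real.sqrt (2 * (1 + α) * Real.log N))
    (q : ℝ) (hq1 : q ≤ 1) :
    (1 - (N : ℝ) * Real.sqrt (2 / Real.pi) * (σ / β) * Real.exp (-β ^ 2 / (2 * σ ^ 2))) * q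
      ≤ 1 - 1 / ((N : ℝ) ^ α * Real.sqrt (Real.pi * (1 + α) * Real.log N)) := by
  have hN2 : (2 : ℝ) ≤ N := by exact_mod_cast hN
  subst hβ
  rw [mul_sqrt_two_div_pi_mul_exp_eq (by linarith) (by linarith) hσ.ne']
  refine mul_le_of_le_one_right ?_ hq1
  rw [sub_nonneg]
  exact div_le_one_of_le₀ (one_le_rpow_mul_sqrt_pi_mul_log hN2 hα.le) (by positivity)

/-- The paper's analytical comparison in Section III: with `β = σ√(2(1+α)log N)` and any
`q ∈ [0,1]` (standing for the second factor of the bound (9) of Theorem 2),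
`(1 − N·√(2/π)·(σ/β)·exp(−β²/(2σ²)))·q ≤ 1 − 1/(N^α·√(π(1+α)·log N))`;
i.e. the success-probability lower bound (9) never exceeds the bound (5) of
Ben-Haim et al.'s Theorem 1. -/
theorem bound_comparison (N : ℕ) (hN : 2 ≤ N) (α σ : ℝ) (hα : 0 < α) (hσ : 0 < σ)
    (β : ℝ) (hβ : β = σ * Real.sqrt (2 * (1 + α) * Real.log N))
    (q : ℝ) (hq0 : 0 ≤ q) (hq1 : q ≤ 1) :
    (1 - (N : ℝ) * Real.sqrt (2 / Real.pi) * (σ / β) * Real.exp (-β ^ 2 / (2 * σ ^ 2))) * q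
      ≤ 1 - 1 / ((N : ℝ) ^ α * Real.sqrt (Real.pi * (1 + α) * Real.log N)) :=
  bound_comparison_general N hN α σ hα hσ β hβ q hq1
end
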